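/- Let u : ℝ → ℝ be a smooth function such that u'' (s) ≥ 2 u(s) (u(s) - 1/2) for all s, u(s) ≥ 0 for all s, and lim_{s → ±∞} u(s) = 1/2. Then u(s) ≤ 1/2 for all s ∈ ℝ. -/

import Mathlib

/-- Step 1 of the L∞ lemma: maximum principle for u'' ≥ 2u(u-1/2). -/
theorem stmt_0 (u : ℝ → ℝ) (hu : ContDiff ℝ (⊤ : ℕ∞) u)
    (hineq : ∀ s, 2 * u s * (u s - 1/2) ≤ deriv (deriv u) s)
    (hnonneg : ∀ s, 0 ≤ u s)
    (htop : Filter.Tendsto u Filter.atTop (nhds (1/2)))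
    (hbot : Filter.Tendsto u Filter.atBot (nhds (1/2))) :
    ∀ s, u s ≤ 1/2 := by
  by_contra h
  push_neg at h
  obtain ⟨s₀, hs₀⟩ := h
  -- outside a compact interval, u < u s₀
  have h1 : ∀ᶠ s in Filter.atTop, u s < u s₀ :=
    htop.eventually_lt_const hs₀
  have h2 : ∀ᶠ s in Filter.atBot, u s < u s₀ :=
    hbot.eventually_lt_const hs₀
  obtain ⟨A, hA⟩ := Filter.eventually_atTop.1 h1
  obtain ⟨B, hB⟩ := Filter.eventually_atBot.1 h2
  set a := min B s₀ with ha
  set b := max A s₀ with hb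
  have hmem : s₀ ∈ Set.Icc a b := ⟨min_le_right _ _, le_max_right _ _⟩
  obtain ⟨c, hcmem, hc⟩ := (isCompact_Icc (a := a) (b := b)).exists_isMaxOn
    ⟨s₀, hmem⟩ (hu.continuous.continuousOn)
  have hmax : ∀ s, u s ≤ u c := by
    intro s
    rcases le_or_gt s a with hs | hs
    · exact le_of_lt (lt_of_lt_of_le (hB s (le_trans hs (min_le_left _ _))) (hc hmem))
    · rcases le_or_gt s b with hsb | hsb
      · exact hc ⟨le_of_lt hs, hsb⟩
      · have : A ≤ s := le_trans (le_max_left _ _) (le_of_lt hsb)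
        exact le_of_lt (lt_of_lt_of_le (hA s this) (hc hmem))
  have hc2 : (1:ℝ)/2 < u c := lt_of_lt_of_le hs₀ (hmax s₀)
  -- derivative facts
  have hdiff : Differentiable ℝ u := hu.differentiable (by simp)
  have hdu : ContDiff ℝ (⊤ : ℕ∞) (deriv u) := (contDiff_infty_iff_deriv.mp (hu.of_le (by simp))).2
  have hducont : Differentiable ℝ (deriv u) := hdu.differentiable (by simp)
  have hlocmax : IsLocalMax u c := Filter.Eventually.of_forall fun s => hmax s
  have hderiv0 : deriv u c = 0 := hlocmax.deriv_eq_zero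
  have hK : 0 < deriv (deriv u) c := by
    have := hineq c
    have h0 : 0 < 2 * u c * (u c - 1/2) := by nlinarith [hnonneg c]
    linarith
  set K := deriv (deriv u) c with hKdef
  have hHD : HasDerivAt (deriv u) K c := (hducont c).hasDerivAt
  -- deriv u > 0 just to the right of c
  have hslope : Filter.Tendsto (slope (deriv u) c) (nhdsWithin c {c}ᶜ) (nhds K) :=
    hasDerivAt_iff_tendsto_slope.mp hHD
  have hpos : ∀ᶠ x in nhdsWithin c (Set.Ioi c), 0 < deriv u x := by
    have hpos' : ∀ᶠ x in nhdsWithin c {c}ᶜ, 0 < slope (deriv u) c x :=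
      hslope.eventually_const_lt hK
    have hsub : nhdsWithin c (Set.Ioi c) ≤ nhdsWithin c {c}ᶜ := by
      apply nhdsWithin_mono
      intro x hx
      exact ne_of_gt hx
    filter_upwards [hsub hpos', self_mem_nhdsWithin] with x hx hxc
    rw [slope_def_field, hderiv0, sub_zero] at hx
    have hxc' : 0 < x - c := sub_pos.mpr hxc
    have h2 := mul_pos hx hxc'
    rwa [div_mul_cancel₀ _ (ne_of_gt hxc')] at h2
  obtain ⟨t, ht, hIoo⟩ := mem_nhdsGT_iff_exists_Ioo_subset.mp hpos
  -- u strictly increasing on [c, t]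
  have hmono : StrictMonoOn u (Set.Icc c t) := by
    apply strictMonoOn_of_deriv_pos (convex_Icc c t) hu.continuous.continuousOn
    intro x hx
    rw [interior_Icc] at hx
    exact hIoo hx
  set m := (c + t) / 2 with hm
  have hct : c < t := ht
  have hcm : c < m := by rw [hm]; linarith
  have hmt : m < t := by rw [hm]; linarith
  have : u c < u m :=
    hmono ⟨le_refl c, le_of_lt ht⟩ ⟨le_of_lt hcm, le_of_lt hmt⟩ hcm
  exact absurd (hmax m) (not_le.mpr this)
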